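/- arXiv:1503.06716 — 3 statements merged into one kernel-verified Lean document; each statement's English description precedes it below -/
import Mathlib

section
/- For every Hurst index H in the open interval (0,1), the improper integral ∫₀^∞ (1 − cos t) · t^{−2H−1} dt converges and equals π / (4·H·Γ(2H)·sin(πH)); equivalently, it equals γ(H)/2 where γ(H) := π / (2·H·Γ(2H)·sin(Hπ)) is the normalizing constant appearing in the variogram formula of the fractional Brownian field. -/
/-!
Writing `Γ(2H+1) t^(-2H-1) = ∫₀^∞ x^(2H) e^(-tx) dx` and exchanging the order of integration
(legitimate by Tonelli, the integrand being nonnegative), the Laplace transform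
`∫₀^∞ (1 - cos t) e^(-xt) dt = 1 / (x (1 + x²))` reduces the integral to
`∫₀^∞ x^(2H-1) / (1 + x²) dx`. Expanding `1 / (1 + x²) = ∫₀^∞ e^(-(1+x²)y) dy` and exchanging once
more turns this into `Γ(H) Γ(1-H) / 2 = π / (2 sin πH)`; finally `Γ(2H+1) = 2H Γ(2H)`.
-/

open MeasureTheory Real Set

theorem integral_integral_swap_of_nonneg {α β : Type*} [MeasurableSpace α] [MeasurableSpace β]
    {μ : Measure α} {ν : Measure β} [SFinite μ] [SFinite ν] {f : α → β → ℝ}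
    (hf : AEStronglyMeasurable (Function.uncurry f) (μ.prod ν))
    (hf_nonneg : ∀ᵐ x ∂μ, 0 ≤ᵐ[ν] f x)
    (hf_sec : ∀ᵐ x ∂μ, Integrable (f x) ν)
    (hf_int : Integrable (fun x => ∫ y, f x y ∂ν) μ) :
    ∫ x, ∫ y, f x y ∂ν ∂μ = ∫ y, ∫ x, f x y ∂μ ∂ν := by
  refine integral_integral_swap ((integrable_prod_iff hf).2 ⟨hf_sec, hf_int.congr ?_⟩)
  filter_upwards [hf_nonneg] with x hx
  exact integral_congr_ae (hx.mono fun y hy => (norm_of_nonneg hy).symm)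

lemma integral_rpow_mul_exp_neg_mul {s t : ℝ} (hs : -1 < s) (ht : 0 < t) :
    ∫ x in Ioi 0, x ^ s * exp (-t * x) = Gamma (s + 1) * t ^ (-s - 1) := by
  have h := integral_rpow_mul_exp_neg_mul_Ioi (a := s + 1) (by linarith) ht
  rw [add_sub_cancel_right, one_div, inv_rpow ht.le, ← rpow_neg ht.le, neg_add'] at h
  simpa only [neg_mul, mul_comm (Gamma _)] using h

lemma integrableOn_rpow_mul_exp_neg_mul {s t : ℝ} (hs : -1 < s) (ht : 0 < t) :
    IntegrableOn (fun x : ℝ => x ^ s * exp (-t * x)) (Ioi 0) := by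
  simpa only [rpow_one] using integrableOn_rpow_mul_exp_neg_mul_rpow hs one_pos ht

lemma integrableOn_one_sub_cos_mul_rpow {s : ℝ} (hs₀ : -3 < s) (hs₁ : s < -1) :
    IntegrableOn (fun t : ℝ => (1 - cos t) * t ^ s) (Ioi 0) := by
  have hmeas : AEStronglyMeasurable (fun t : ℝ => (1 - cos t) * t ^ s) := by fun_prop
  rw [← Ioc_union_Ioi_eq_Ioi zero_le_one, integrableOn_union]
  constructor
  · have hbound : IntegrableOn (fun t : ℝ => t ^ (s + 2) / 2) (Ioc 0 1) := by
      rw [← intervalIntegrable_iff_integrableOn_Ioc_of_le zero_le_one]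
      exact (intervalIntegral.intervalIntegrable_rpow' (by linarith)).div_const 2
    refine hbound.mono' hmeas.restrict ((ae_restrict_mem measurableSet_Ioc).mono fun t ht => ?_)
    have ht₀ : 0 < t := ht.1
    rw [norm_of_nonneg (mul_nonneg (by linarith [cos_le_one t]) (by positivity)),
      rpow_add ht₀, rpow_two]
    have := one_sub_sq_div_two_le_cos (x := t)
    have : 0 ≤ t ^ s := by positivity
    nlinarith
  · refine ((integrableOn_Ioi_rpow_of_lt hs₁ zero_lt_one).const_mul 2).mono' hmeas.restrict
      ((ae_restrict_mem measurableSet_Ioi).mono fun t ht => ?_)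
    have ht₀ : (0 : ℝ) < t := zero_lt_one.trans ht
    rw [norm_of_nonneg (mul_nonneg (by linarith [cos_le_one t]) (by positivity))]
    have := neg_one_le_cos t
    have : 0 ≤ t ^ s := by positivity
    nlinarith

lemma cos_mul_exp_neg_mul_eq_re (x t : ℝ) :
    cos t * exp (-x * t) = (Complex.exp ((-x + Complex.I) * t)).re := by
  rw [Complex.exp_re]
  simp only [Complex.mul_re, Complex.add_re, Complex.neg_re, Complex.ofReal_re, Complex.I_re,
    add_zero, Complex.add_im, Complex.neg_im, Complex.ofReal_im, neg_zero, Complex.I_im, zero_add,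
    mul_zero, sub_zero, Complex.mul_im, one_mul]
  ring

lemma integrableOn_cos_mul_exp_neg_mul {x : ℝ} (hx : 0 < x) :
    IntegrableOn (fun t : ℝ => cos t * exp (-x * t)) (Ioi 0) := by
  simp_rw [cos_mul_exp_neg_mul_eq_re]
  exact (integrableOn_exp_mul_complex_Ioi (by simpa using hx) 0).re

lemma integral_cos_mul_exp_neg_mul {x : ℝ} (hx : 0 < x) :
    ∫ t in Ioi 0, cos t * exp (-x * t) = x / (1 + x ^ 2) := by
  simp_rw [cos_mul_exp_neg_mul_eq_re]
  have h := integral_re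
    (integrableOn_exp_mul_complex_Ioi (a := -x + Complex.I) (by simpa using hx) 0)
  simp only [RCLike.re_to_complex] at h
  rw [h, integral_exp_mul_complex_Ioi (by simpa using hx)]
  simp [Complex.div_re, Complex.normSq, sq, add_comm]

lemma integral_one_sub_cos_mul_exp_neg_mul {x : ℝ} (hx : 0 < x) :
    ∫ t in Ioi 0, (1 - cos t) * exp (-x * t) = 1 / (x * (1 + x ^ 2)) := by
  simp_rw [sub_mul, one_mul]
  rw [integral_sub (exp_neg_integrableOn_Ioi 0 hx) (integrableOn_cos_mul_exp_neg_mul hx),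
    integral_cos_mul_exp_neg_mul hx, integral_exp_mul_Ioi (neg_neg_iff_pos.2 hx)]
  simp only [mul_zero, exp_zero]
  field_simp
  ring

lemma integral_rpow_mul_inv_one_add_sq {H : ℝ} (hH₀ : 0 < H) (hH₁ : H < 1) :
    ∫ x in Ioi 0, x ^ (2 * H - 1) * (1 + x ^ 2)⁻¹ = π / (2 * sin (π * H)) := by
  let g : ℝ → ℝ → ℝ := fun y x => exp (-y) * (x ^ (2 * H - 1) * exp (-y * x ^ (2 : ℝ)))
  have inner_x : ∀ y > 0, ∫ x in Ioi 0, g y x = Gamma H / 2 * (exp (-y) * y ^ (1 - H - 1)) := by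
    intro y hy
    rw [integral_const_mul, integral_rpow_mul_exp_neg_mul_rpow two_pos (by linarith) hy,
      show (2 * H - 1 + 1) / 2 = H by ring, show -(2 * H - 1 + 1) / 2 = 1 - H - 1 by ring]
    ring
  have inner_y : ∀ x > 0, ∫ y in Ioi 0, g y x = x ^ (2 * H - 1) * (1 + x ^ 2)⁻¹ := by
    intro x hx
    have hg : ∀ y, g y x = x ^ (2 * H - 1) * exp (-(1 + x ^ 2) * y) := fun y => by
      simp only [g, rpow_two, mul_left_comm (exp (-y)), ← exp_add]
      ring_nf
    simp_rw [hg]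
    rw [integral_const_mul, integral_exp_mul_Ioi (by nlinarith), mul_zero, exp_zero,
      neg_div_neg_eq, one_div]
  have hswap := integral_integral_swap_of_nonneg (μ := volume.restrict (Ioi 0))
    (ν := volume.restrict (Ioi 0)) (f := g) (by fun_prop) ?_ ?_ ?_
  calc ∫ x in Ioi 0, x ^ (2 * H - 1) * (1 + x ^ 2)⁻¹
      = ∫ x in Ioi 0, ∫ y in Ioi 0, g y x := setIntegral_congr_fun measurableSet_Ioi
        fun x hx => (inner_y x hx).symm
    _ = ∫ y in Ioi 0, Gamma H / 2 * (exp (-y) * y ^ (1 - H - 1)) := by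
      rw [← hswap]
      exact setIntegral_congr_fun measurableSet_Ioi inner_x
    _ = π / (2 * sin (π * H)) := by
      rw [integral_const_mul, ← Gamma_eq_integral (by linarith), div_mul_eq_mul_div,
        Gamma_mul_Gamma_one_sub, div_div, mul_comm]
  · filter_upwards [ae_restrict_mem measurableSet_Ioi] with y _
    filter_upwards [ae_restrict_mem measurableSet_Ioi] with x (hx : 0 < x)
    positivity
  · filter_upwards [ae_restrict_mem measurableSet_Ioi] with y hy
    exact (integrableOn_rpow_mul_exp_neg_mul_rpow (by linarith) two_pos hy).const_mul _
  · refine ((GammaIntegral_convergent (sub_pos.2 hH₁)).const_mul (Gamma H / 2)).congr ?_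
    filter_upwards [ae_restrict_mem measurableSet_Ioi] with y hy
    exact (inner_x y hy).symm

lemma Gamma_mul_integral_one_sub_cos_mul_rpow {H : ℝ} (hH₀ : 0 < H) (hH₁ : H < 1) :
    Gamma (2 * H + 1) * ∫ t in Ioi 0, (1 - cos t) * t ^ (-2 * H - 1) =
      ∫ x in Ioi 0, x ^ (2 * H - 1) * (1 + x ^ 2)⁻¹ := by
  let f : ℝ → ℝ → ℝ := fun t x => (1 - cos t) * (x ^ (2 * H) * exp (-t * x))
  have inner_x : ∀ t > 0,
      ∫ x in Ioi 0, f t x = Gamma (2 * H + 1) * ((1 - cos t) * t ^ (-2 * H - 1)) := by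
    intro t ht
    rw [integral_const_mul, integral_rpow_mul_exp_neg_mul (by linarith) ht, neg_mul]
    ring
  have inner_t : ∀ x > 0, ∫ t in Ioi 0, f t x = x ^ (2 * H - 1) * (1 + x ^ 2)⁻¹ := by
    intro x hx
    have hf : ∀ t, f t x = x ^ (2 * H) * ((1 - cos t) * exp (-x * t)) := fun t => by
      simp only [f]
      ring_nf
    simp_rw [hf]
    rw [integral_const_mul, integral_one_sub_cos_mul_exp_neg_mul hx, rpow_sub_one hx.ne']
    field_simp
  have hswap := integral_integral_swap_of_nonneg (μ := volume.restrict (Ioi 0))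
    (ν := volume.restrict (Ioi 0)) (f := f) (by fun_prop) ?_ ?_ ?_
  · calc Gamma (2 * H + 1) * ∫ t in Ioi 0, (1 - cos t) * t ^ (-2 * H - 1)
        = ∫ t in Ioi 0, ∫ x in Ioi 0, f t x := by
          rw [← integral_const_mul]
          exact setIntegral_congr_fun measurableSet_Ioi fun t ht => (inner_x t ht).symm
      _ = ∫ x in Ioi 0, x ^ (2 * H - 1) * (1 + x ^ 2)⁻¹ := by
          rw [hswap]
          exact setIntegral_congr_fun measurableSet_Ioi inner_t
  · filter_upwards [ae_restrict_mem measurableSet_Ioi] with t _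
    filter_upwards [ae_restrict_mem measurableSet_Ioi] with x (hx : 0 < x)
    have := cos_le_one t
    exact mul_nonneg (by linarith) (by positivity)
  · filter_upwards [ae_restrict_mem measurableSet_Ioi] with t ht
    exact (integrableOn_rpow_mul_exp_neg_mul (by linarith) ht).const_mul _
  · refine ((integrableOn_one_sub_cos_mul_rpow (s := -2 * H - 1) (by linarith)
      (by linarith)).const_mul (Gamma (2 * H + 1))).congr ?_
    filter_upwards [ae_restrict_mem measurableSet_Ioi] with t ht
    exact (inner_x t ht).symm

/-- For every Hurst index `H ∈ (0,1)`, the improper integral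
`∫₀^∞ (1 − cos t) · t^(−2H−1) dt` converges and equals
`π / (4·H·Γ(2H)·sin(πH))`. -/
theorem fbm_normalizing_constant (H : ℝ) (hH : H ∈ Set.Ioo (0 : ℝ) 1) :
    IntegrableOn (fun t : ℝ => (1 - Real.cos t) * t ^ (-2 * H - 1)) (Set.Ioi 0) volume ∧
    ∫ t in Set.Ioi (0 : ℝ), (1 - Real.cos t) * t ^ (-2 * H - 1) =
      π / (4 * H * Real.Gamma (2 * H) * Real.sin (π * H)) := by
  obtain ⟨hH₀, hH₁⟩ := hH
  refine ⟨integrableOn_one_sub_cos_mul_rpow (by linarith) (by linarith), ?_⟩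
  have key := Gamma_mul_integral_one_sub_cos_mul_rpow hH₀ hH₁
  rw [integral_rpow_mul_inv_one_add_sq hH₀ hH₁, Gamma_add_one (by positivity)] at key
  have hΓ : 0 < Gamma (2 * H) := Gamma_pos_of_pos (by positivity)
  have hsin : 0 < sin (π * H) := sin_pos_of_pos_of_lt_pi (by positivity) (by nlinarith [pi_pos])
  rw [eq_div_iff (by positivity)] at key ⊢
  linear_combination key
end

section
/- Let H ∈ (0,1), p ∈ ℤ, q a positive integer, r > 0, and let θ := arctan(p/q), so that cos θ = q/√(p² + q²) and sin θ = p/√(p² + q²). Then for all integers k₁, k₂, k₁′, k₂′, the fractional Brownian covariance kernel satisfies K_H((k₁ cos θ + k₂ sin θ)/r, (k₁′ cos θ + k₂′ sin θ)/r) = (cos θ/(r q))^{2H} · K_H(k₁ q + k₂ p, k₁′ q + k₂′ p). (This is the key identity of the turning-band method: along a band of rational slope p/q, the restriction of a fractional Brownian motion to the projected grid has, up to the scale factor (cos θ/(rq))^H, the same covariance as the fractional Brownian motion sampled at the integer points k₁q + k₂p, allowing exact fast synthesis on a regular grid.) -/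
/-!
The kernel `K_H` is homogeneous of degree `2H` under nonnegative scalings, and with
`tan θ = p/q` the projection `k₁ cos θ + k₂ sin θ` is the positive multiple `cos θ / q` of the
integer `k₁ q + k₂ p`.
-/

open Real

noncomputable section

/-- The covariance kernel of fractional Brownian motion of Hurst index `H`. -/
def fbmCov (H s t : ℝ) : ℝ := (|s| ^ (2 * H) + |t| ^ (2 * H) - |s - t| ^ (2 * H)) / 2

theorem fbmCov_mul_mul (H c s t : ℝ) (hc : 0 ≤ c) :
    fbmCov H (c * s) (c * t) = c ^ (2 * H) * fbmCov H s t := by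
  have abs_mul_rpow (x : ℝ) : |c * x| ^ (2 * H) = c ^ (2 * H) * |x| ^ (2 * H) := by
    rw [abs_mul, abs_of_nonneg hc, mul_rpow hc (abs_nonneg x)]
  simp only [fbmCov, ← mul_sub, abs_mul_rpow]
  ring

theorem sin_arctan_eq_mul_cos_arctan (z : ℝ) : sin (arctan z) = z * cos (arctan z) := by
  rw [sin_arctan, cos_arctan, mul_one_div]

theorem mul_cos_arctan_add_mul_sin_arctan_div (a b x y : ℝ) (hx : x ≠ 0) :
    a * cos (arctan (y / x)) + b * sin (arctan (y / x)) =
      cos (arctan (y / x)) / x * (a * x + b * y) := by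
  rw [sin_arctan_eq_mul_cos_arctan]
  field_simp

theorem turning_band_covariance_identity_general
    (H : ℝ) (p : ℤ) (q : ℤ) (hq : 0 < q) (r : ℝ) (hr : 0 < r)
    (θ : ℝ) (hθ : θ = Real.arctan ((p : ℝ) / (q : ℝ)))
    (k₁ k₂ k₁' k₂' : ℤ) :
    fbmCov H (((k₁ : ℝ) * Real.cos θ + (k₂ : ℝ) * Real.sin θ) / r)
        (((k₁' : ℝ) * Real.cos θ + (k₂' : ℝ) * Real.sin θ) / r) =
      (Real.cos θ / (r * (q : ℝ))) ^ (2 * H) *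
        fbmCov H ((k₁ * q + k₂ * p : ℤ) : ℝ) ((k₁' * q + k₂' * p : ℤ) : ℝ) := by
  subst hθ
  have hq' : (0 : ℝ) < q := Int.cast_pos.mpr hq
  have projection (a b : ℤ) :
      ((a : ℝ) * cos (arctan (p / q)) + (b : ℝ) * sin (arctan (p / q))) / r =
        cos (arctan (p / q)) / (r * q) * ((a * q + b * p : ℤ) : ℝ) := by
    rw [mul_cos_arctan_add_mul_sin_arctan_div _ _ _ _ hq'.ne']
    push_cast
    field_simp
  rw [projection, projection,
    fbmCov_mul_mul _ _ _ _ (div_pos (cos_arctan_pos _) (mul_pos hr hq')).le]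

/-- Key identity of the turning-band method: along a band of rational slope
`p/q` (with angle `θ = arctan(p/q)`), the fractional Brownian covariance on the
projected grid points `(k₁ cos θ + k₂ sin θ)/r` equals, up to the factor
`(cos θ/(rq))^{2H}`, the fractional Brownian covariance at the integers
`k₁q + k₂p`. -/
theorem turning_band_covariance_identity (H : ℝ) (hH : H ∈ Set.Ioo (0 : ℝ) 1)
    (p : ℤ) (q : ℤ) (hq : 0 < q) (r : ℝ) (hr : 0 < r)
    (θ : ℝ) (hθ : θ = Real.arctan ((p : ℝ) / (q : ℝ)))
    (k₁ k₂ k₁' k₂' : ℤ) :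
    fbmCov H (((k₁ : ℝ) * Real.cos θ + (k₂ : ℝ) * Real.sin θ) / r)
        (((k₁' : ℝ) * Real.cos θ + (k₂' : ℝ) * Real.sin θ) / r) =
      (Real.cos θ / (r * (q : ℝ))) ^ (2 * H) *
        fbmCov H ((k₁ * q + k₂ * p : ℤ) : ℝ) ((k₁' * q + k₂' * p : ℤ) : ℝ) :=
  turning_band_covariance_identity_general H p q hq r hr θ hθ k₁ k₂ k₁' k₂'

end
end

section
/- Let (Ω, μ) be a probability space, H ∈ (0,1), n ∈ ℕ, and let B₁, …, Bₙ : ℝ → L²(Ω; ℝ) be centered processes that are pairwise uncorrelated across indices (E[B_i(s) B_j(t)] = 0 whenever i ≠ j) and each have the fractional Brownian covariance E[B_i(s) B_i(t)] = K_H(s,t). Given angles θ₁, …, θₙ ∈ ℝ and nonnegative weights λ₁, …, λₙ and c₁, …, cₙ, define the turning-band field Y(x) := Σ_{i=1}^{n} √(γ(H) λ_i c_i) · B_i(x·u(θ_i)) for x ∈ ℝ². Then for all x, y ∈ ℝ², E[(Y(x) − Y(y))²] = γ(H) Σ_{i=1}^{n} λ_i c_i |(x−y)·u(θ_i)|^{2H};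 in particular the turning-band field has stationary second-order increments with variogram given by the discrete angular sum Σ_i λ_i c_i |z·u(θ_i)|^{2H}, the Riemann-sum approximation of the elementary field's variogram. -/
/-! The increments `Bᵢ(x·u(θᵢ)) − Bᵢ(y·u(θᵢ))` are pairwise orthogonal in `L²(μ)`, so the second
moment of `Y(x) − Y(y)` is the sum of the squared weights `γ(H)λᵢcᵢ` times the increment variances.
For a covariance `K_H` the increment variance is `K_H(s,s) − 2K_H(s,t) + K_H(t,t) = |s − t|^{2H}`,
and `s − t = (x − y)·u(θᵢ)` by linearity of the inner product. -/

open MeasureTheory Real Set Finset RealInnerProductSpace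

noncomputable section

/-- The normalizing constant `γ(H)`. -/
def gammaH (H : ℝ) : ℝ := π / (2 * H * Real.Gamma (2 * H) * Real.sin (H * π))

/-- The unit vector of angle `θ`. -/
def u (θ : ℝ) : EuclideanSpace ℝ (Fin 2) :=
  WithLp.toLp 2 ![Real.cos θ, Real.sin θ]

lemma fbmCov_self {H : ℝ} (hH : H ≠ 0) (s : ℝ) : fbmCov H s s = |s| ^ (2 * H) := by
  rw [fbmCov, sub_self, abs_zero, zero_rpow (mul_ne_zero two_ne_zero hH)]
  ring

lemma fbmCov_comm (H s t : ℝ) : fbmCov H s t = fbmCov H t s := by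
  rw [fbmCov, fbmCov, abs_sub_comm]
  ring

lemma fbmCov_increment_variance {H : ℝ} (hH : H ≠ 0) (s t : ℝ) :
    fbmCov H s s - fbmCov H s t - fbmCov H t s + fbmCov H t t = |s - t| ^ (2 * H) := by
  rw [fbmCov_self hH, fbmCov_self hH, fbmCov_comm H t s, fbmCov]
  ring

lemma gammaH_nonneg {H : ℝ} (h0 : 0 ≤ H) (h1 : H ≤ 1) : 0 ≤ gammaH H := by
  have hsin : 0 ≤ Real.sin (H * π) :=
    sin_nonneg_of_nonneg_of_le_pi (by positivity) (by nlinarith [pi_pos])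
  unfold gammaH
  have := Gamma_nonneg_of_nonneg (by positivity : 0 ≤ 2 * H)
  positivity

section L2

variable {Ω : Type*} [MeasurableSpace Ω] {μ : Measure Ω}

lemma integral_sub_mul_sub {X X' Z Z' : Ω → ℝ} (hX : MemLp X 2 μ) (hX' : MemLp X' 2 μ)
    (hZ : MemLp Z 2 μ) (hZ' : MemLp Z' 2 μ) :
    ∫ ω, (X ω - X' ω) * (Z ω - Z' ω) ∂μ =
      ∫ ω, X ω * Z ω ∂μ - ∫ ω, X ω * Z' ω ∂μ - ∫ ω, X' ω * Z ω ∂μ + ∫ ω, X' ω * Z' ω ∂μ := by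
  have hint : ∀ {f g : Ω → ℝ}, MemLp f 2 μ → MemLp g 2 μ →
      Integrable (fun ω => f ω * g ω) μ := fun hf hg => hf.integrable_mul hg
  have expand : ∀ ω, (X ω - X' ω) * (Z ω - Z' ω) =
      X ω * Z ω - X ω * Z' ω - (X' ω * Z ω - X' ω * Z' ω) := fun ω => by ring
  have hXZ : Integrable (fun ω => X ω * Z ω - X ω * Z' ω) μ := (hint hX hZ).sub (hint hX hZ')
  have hX'Z : Integrable (fun ω => X' ω * Z ω - X' ω * Z' ω) μ := (hint hX' hZ).sub (hint hX' hZ')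
  simp only [expand]
  rw [integral_sub hXZ hX'Z,
    integral_sub (hint hX hZ) (hint hX hZ'), integral_sub (hint hX' hZ) (hint hX' hZ')]
  ring

lemma integral_sq_sum_of_pairwise_orthogonal {ι : Type*} [Fintype ι] {X : ι → Ω → ℝ}
    (hX : ∀ i, MemLp (X i) 2 μ)
    (horth : Pairwise fun i j => ∫ ω, X i ω * X j ω ∂μ = 0) (a : ι → ℝ) :
    ∫ ω, (∑ i, a i * X i ω) ^ 2 ∂μ = ∑ i, a i ^ 2 * ∫ ω, X i ω ^ 2 ∂μ := by
  classical
  have hint : ∀ i j, Integrable (fun ω => a i * a j * (X i ω * X j ω)) μ := fun i j =>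
    ((hX i).integrable_mul (hX j)).const_mul _
  calc ∫ ω, (∑ i, a i * X i ω) ^ 2 ∂μ
      = ∫ ω, ∑ i, ∑ j, a i * a j * (X i ω * X j ω) ∂μ := by
        congr 1 with ω
        rw [sq, sum_mul_sum]
        exact sum_congr rfl fun i _ => sum_congr rfl fun j _ => by ring
    _ = ∑ i, ∑ j, a i * a j * ∫ ω, X i ω * X j ω ∂μ := by
        rw [integral_finsetSum _ fun i _ => integrable_finsetSum _ fun j _ => hint i j]
        refine sum_congr rfl fun i _ => ?_
        rw [integral_finsetSum _ fun j _ => hint i j]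
        simp only [integral_const_mul]
    _ = ∑ i, a i ^ 2 * ∫ ω, X i ω ^ 2 ∂μ := by
        refine sum_congr rfl fun i _ => ?_
        rw [sum_eq_single_of_mem i (mem_univ i) fun j _ hji => by rw [horth hji.symm, mul_zero]]
        simp only [sq]

end L2

theorem turning_band_field_variogram_general {Ω : Type*} [MeasurableSpace Ω]
    (μ : Measure Ω)
    (H : ℝ) (hH : H ∈ Set.Ioo (0 : ℝ) 1) (n : ℕ)
    (B : Fin n → ℝ → Ω → ℝ)
    (hL2 : ∀ i s, MemLp (B i s) 2 μ)
    (huncorr : ∀ i j, i ≠ j → ∀ s t, ∫ ω, B i s ω * B j t ω ∂μ = 0)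
    (hcov : ∀ i s t, ∫ ω, B i s ω * B i t ω ∂μ = fbmCov H s t)
    (θ : Fin n → ℝ) (lam c : Fin n → ℝ)
    (hlam : ∀ i, 0 ≤ lam i) (hc : ∀ i, 0 ≤ c i)
    (Y : EuclideanSpace ℝ (Fin 2) → Ω → ℝ)
    (hY : ∀ x ω, Y x ω =
      ∑ i, Real.sqrt (gammaH H * lam i * c i) * B i ⟪x, u (θ i)⟫ ω) :
    ∀ x y : EuclideanSpace ℝ (Fin 2),
      ∫ ω, (Y x ω - Y y ω) ^ 2 ∂μ =
        gammaH H * ∑ i, lam i * c i * |⟪x - y, u (θ i)⟫| ^ (2 * H) := by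
  intro x y
  set incr : Fin n → Ω → ℝ := fun i ω => B i ⟪x, u (θ i)⟫ ω - B i ⟪y, u (θ i)⟫ ω
  have hincr : ∀ i, MemLp (incr i) 2 μ := fun i => (hL2 i _).sub (hL2 i _)
  have hYincr : ∀ ω, Y x ω - Y y ω = ∑ i, √(gammaH H * lam i * c i) * incr i ω := fun ω => by
    simp only [hY, incr, mul_sub, sum_sub_distrib]
  have horth : Pairwise fun i j => ∫ ω, incr i ω * incr j ω ∂μ = 0 := fun i j hij => by
    simp only [incr, integral_sub_mul_sub (hL2 i _) (hL2 i _) (hL2 j _) (hL2 j _),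
      huncorr i j hij, sub_zero, add_zero]
  have hvar : ∀ i, ∫ ω, incr i ω ^ 2 ∂μ = |⟪x - y, u (θ i)⟫| ^ (2 * H) := fun i => by
    simp only [incr, sq, integral_sub_mul_sub (hL2 i _) (hL2 i _) (hL2 i _) (hL2 i _), hcov,
      fbmCov_increment_variance hH.1.ne', inner_sub_left]
  simp only [hYincr, integral_sq_sum_of_pairwise_orthogonal hincr horth, hvar, mul_sum]
  refine sum_congr rfl fun i _ => ?_
  rw [sq_sqrt (mul_nonneg (mul_nonneg (gammaH_nonneg hH.1.le hH.2.le) (hlam i)) (hc i))]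
  ring

/-- Variogram of the turning-band field: if `B₁,…,Bₙ` are centered,
square-integrable, pairwise uncorrelated processes with fractional Brownian
covariance `K_H`, then the turning-band field
`Y(x) = Σᵢ √(γ(H)λᵢcᵢ) Bᵢ(x·u(θᵢ))` has stationary second-order increments with
`E[(Y(x) − Y(y))²] = γ(H) Σᵢ λᵢ cᵢ |(x−y)·u(θᵢ)|^{2H}`. -/
theorem turning_band_field_variogram {Ω : Type*} [MeasurableSpace Ω]
    (μ : Measure Ω) [IsProbabilityMeasure μ]
    (H : ℝ) (hH : H ∈ Set.Ioo (0 : ℝ) 1) (n : ℕ)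
    (B : Fin n → ℝ → Ω → ℝ)
    (hL2 : ∀ i s, MemLp (B i s) 2 μ)
    (hcentered : ∀ i s, ∫ ω, B i s ω ∂μ = 0)
    (huncorr : ∀ i j, i ≠ j → ∀ s t, ∫ ω, B i s ω * B j t ω ∂μ = 0)
    (hcov : ∀ i s t, ∫ ω, B i s ω * B i t ω ∂μ = fbmCov H s t)
    (θ : Fin n → ℝ) (lam c : Fin n → ℝ)
    (hlam : ∀ i, 0 ≤ lam i) (hc : ∀ i, 0 ≤ c i)
    (Y : EuclideanSpace ℝ (Fin 2) → Ω → ℝ)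
    (hY : ∀ x ω, Y x ω =
      ∑ i, Real.sqrt (gammaH H * lam i * c i) * B i ⟪x, u (θ i)⟫ ω) :
    ∀ x y : EuclideanSpace ℝ (Fin 2),
      ∫ ω, (Y x ω - Y y ω) ^ 2 ∂μ =
        gammaH H * ∑ i, lam i * c i * |⟪x - y, u (θ i)⟫| ^ (2 * H) :=
  turning_band_field_variogram_general μ H hH n B hL2 huncorr hcov θ lam c hlam hc Y hY

end
end
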